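/- If A is a symplectic matrix (A^T J A = J for the standard symplectic matrix J on ℝ^{2n}), then det A = 1. -/

import Mathlib

open Matrix

/-- The standard symplectic matrix `J = [[0, I], [-I, 0]]` on `ℝ^{2n}`. -/
def Jmat (n : ℕ) : Matrix (Fin n ⊕ Fin n) (Fin n ⊕ Fin n) ℝ :=
  Matrix.fromBlocks 0 1 (-1) 0

/-- determinant of a real PSD matrix is nonnegative -/
lemma psd_det_nonneg {m : Type*} [Fintype m] [DecidableEq m]
    {M : Matrix m m ℝ} (h : M.PosSemidef) : 0 ≤ M.det := by
  rw [h.1.det_eq_prod_eigenvalues]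
  exact Finset.prod_nonneg fun i _ => by simpa using h.eigenvalues_nonneg i

lemma det_block_mul {n : ℕ} (A B : Matrix (Fin n) (Fin n) ℂ) :
    (fromBlocks A B (-B) A).det = (A + Complex.I • B).det * (A - Complex.I • B).det := by
  set z := A + Complex.I • B with hz
  set w := A - Complex.I • B with hw
  set P : Matrix (Fin n ⊕ Fin n) (Fin n ⊕ Fin n) ℂ :=
    fromBlocks 1 1 (Complex.I • 1) (-(Complex.I • 1)) with hP
  have hsim : fromBlocks A B (-B) A * P = P * fromBlocks z 0 0 w := by
    rw [hP, fromBlocks_multiply, fromBlocks_multiply]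
    refine fromBlocks_inj.mpr ⟨?_, ?_, ?_, ?_⟩ <;>
      simp [hz, hw, Matrix.mul_smul, Matrix.smul_mul, smul_smul, Complex.I_mul_I,
        smul_add, smul_sub, neg_smul] <;> abel
  have hdetP : P.det = (-(2 * Complex.I)) ^ n := by
    rw [hP, det_fromBlocks_one₁₁]
    have : -(Complex.I • (1 : Matrix (Fin n) (Fin n) ℂ)) - Complex.I • 1 * 1
        = (-(2 * Complex.I)) • 1 := by
      simp [Matrix.smul_mul]
      module
    rw [this, det_smul, det_one, mul_one, Fintype.card_fin]
  have hPne : P.det ≠ 0 := by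
    rw [hdetP]
    exact pow_ne_zero _ (by simp [Complex.I_ne_zero])
  have := congrArg Matrix.det hsim
  rw [det_mul, det_mul, det_fromBlocks_zero₂₁] at this
  rw [mul_comm] at this
  exact mul_left_cancel₀ hPne this

lemma det_block_nonneg {n : ℕ} (a b : Matrix (Fin n) (Fin n) ℝ) :
    0 ≤ (fromBlocks a b (-b) a).det := by
  set az := a.map Complex.ofReal with haz
  set bz := b.map Complex.ofReal with hbz
  have hmap : (fromBlocks a b (-b) a).map (Complex.ofRealHom : ℝ →+* ℂ)
      = fromBlocks az bz (-bz) az := by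
    ext i j
    cases i <;> cases j <;> simp [fromBlocks, Matrix.map_apply, haz, hbz]
  set z := az + Complex.I • bz with hz
  have hconj : az - Complex.I • bz = z.map (starRingEnd ℂ) := by
    ext i j
    simp [hz, haz, hbz, Matrix.map_apply, Matrix.smul_apply, Complex.conj_ofReal, sub_eq_add_neg]
  have key : ((fromBlocks a b (-b) a).det : ℂ) = z.det * (starRingEnd ℂ) z.det := by
    have hc : ((fromBlocks a b (-b) a).det : ℂ)
        = ((fromBlocks a b (-b) a).map (Complex.ofRealHom : ℝ →+* ℂ)).det :=
      (RingHom.map_det (Complex.ofRealHom) _).trans (by rw [RingHom.mapMatrix_apply])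
    rw [hc, hmap, det_block_mul, hconj, ← hz]
    congr 1
    exact ((RingHom.map_det (starRingEnd ℂ) z).trans (by rw [RingHom.mapMatrix_apply])).symm
  rw [Complex.mul_conj] at key
  have := Complex.ofReal_injective key
  rw [this]
  exact Complex.normSq_nonneg _

open scoped MatrixOrder

/-- A symplectic matrix (`AᵀJA = J`) has determinant one. -/
theorem det_eq_one_of_symplectic (n : ℕ)
    (A : Matrix (Fin n ⊕ Fin n) (Fin n ⊕ Fin n) ℝ)
    (hA : Aᵀ * Jmat n * A = Jmat n) :
    A.det = 1 := by
  set J := Jmat n with hJ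
  have hJT : Jᵀ = -J := by
    rw [hJ, Jmat, fromBlocks_transpose]
    simp [fromBlocks_neg]
  have hJJ : J * J = -1 := by
    rw [hJ, Jmat, fromBlocks_multiply]
    simp [← fromBlocks_one, fromBlocks_neg]
  have hJJT : J * Jᵀ = 1 := by rw [hJT, Matrix.mul_neg, hJJ, neg_neg]
  have hJTJ : Jᵀ * J = 1 := by rw [hJT, Matrix.neg_mul, hJJ, neg_neg]
  have hdetJ : J.det ≠ 0 := by
    have := congrArg Matrix.det hJJT
    rw [det_mul, det_transpose, det_one] at this
    exact (IsUnit.of_mul_eq_one _ this).ne_zero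
  have hdetA2 : A.det * A.det = 1 := by
    have h := congrArg Matrix.det hA
    rw [det_mul, det_mul, det_transpose] at h
    have h2 : (A.det * A.det) * J.det = 1 * J.det := by linear_combination h
    exact mul_right_cancel₀ hdetJ h2
  -- A is also symplectic "on the right"
  have e1 : J * Aᵀ * J * A = -1 := by
    calc J * Aᵀ * J * A = J * (Aᵀ * J * A) := by noncomm_ring
    _ = J * J := by rw [hA]
    _ = -1 := hJJ
  have h2 : A * (-(J * Aᵀ * J)) = 1 := by
    rw [mul_eq_one_comm]
    rw [Matrix.neg_mul, e1, neg_neg]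
  have hAJAT : A * J * Aᵀ = J := by
    have e2 : A * J * Aᵀ * J = -1 := by
      have h3 : -(A * J * Aᵀ * J) = 1 := by
        calc -(A * J * Aᵀ * J) = A * (-(J * Aᵀ * J)) := by noncomm_ring
        _ = 1 := h2
      linear_combination (norm := noncomm_ring) -h3
    calc A * J * Aᵀ = (A * J * Aᵀ * J) * Jᵀ := by rw [Matrix.mul_assoc (A * J * Aᵀ) J Jᵀ, hJJT, Matrix.mul_one]
    _ = -Jᵀ := by rw [e2]; noncomm_ring
    _ = J := by rw [hJT, neg_neg]
  have hAJT : A * Jᵀ * Aᵀ = Jᵀ := by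
    rw [hJT]
    calc A * -J * Aᵀ = -(A * J * Aᵀ) := by noncomm_ring
    _ = -J := by rw [hAJAT]
  have hATJT : Aᵀ * Jᵀ * A = Jᵀ := by
    have := congrArg Matrix.transpose hA
    rwa [transpose_mul, transpose_mul, transpose_transpose, ← Matrix.mul_assoc] at this
  -- the positive semidefinite square root S of AᵀA
  have hP : (Aᵀ * A).PosSemidef := by
    have := posSemidef_conjTranspose_mul_self A
    rwa [conjTranspose_eq_transpose_of_trivial] at this
  set S := CFC.sqrt (Aᵀ * A) with hSdef
  have hS : S.PosSemidef := (CFC.sqrt_nonneg _).posSemidef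
  have hSS : S * S = Aᵀ * A := CFC.sqrt_mul_sqrt_self _ hP.nonneg
  have hSsym : Sᵀ = S := by
    have h := hS.1.eq
    rwa [conjTranspose_eq_transpose_of_trivial] at h
  have hdetS : S.det = 1 := by
    have h1 : S.det * S.det = 1 := by
      have := congrArg Matrix.det hSS
      rwa [det_mul, det_mul, det_transpose, hdetA2] at this
    have h0 : 0 ≤ S.det := psd_det_nonneg hS
    nlinarith
  have hSunit : IsUnit S.det := by rw [hdetS]; exact isUnit_one
  -- T = JᵀSJ is the inverse of S
  set T := Jᵀ * S * J with hTdef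
  have hT : T.PosSemidef := by
    have := hS.conjTranspose_mul_mul_same J
    rwa [conjTranspose_eq_transpose_of_trivial] at this
  have hPinv : (Aᵀ * A)⁻¹ = Jᵀ * (Aᵀ * A) * J := by
    apply inv_eq_right_inv
    calc (Aᵀ * A) * (Jᵀ * (Aᵀ * A) * J)
        = Aᵀ * ((A * Jᵀ * Aᵀ) * (A * J)) := by noncomm_ring
    _ = (Aᵀ * Jᵀ * A) * J := by rw [hAJT]; noncomm_ring
    _ = Jᵀ * J := by rw [hATJT]
    _ = 1 := hJTJ
  have hTinv : T = S⁻¹ := by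
    rw [← CFC.sqrt_sq T hT.nonneg, ← CFC.sqrt_sq S⁻¹ hS.inv.nonneg]
    congr 1
    have hT2 : T ^ 2 = Jᵀ * (Aᵀ * A) * J := by
      calc T ^ 2 = (Jᵀ * S * J) * (Jᵀ * S * J) := by rw [hTdef, pow_two]
      _ = Jᵀ * (S * (J * Jᵀ) * S) * J := by noncomm_ring
      _ = Jᵀ * (S * S) * J := by rw [hJJT, Matrix.mul_one]
      _ = Jᵀ * (Aᵀ * A) * J := by rw [hSS]
    rw [hT2, ← hPinv, ← hSS, Matrix.mul_inv_rev, pow_two]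
  have hTS : T * S = 1 := by rw [hTinv]; exact nonsing_inv_mul S hSunit
  have hST : S * T = 1 := mul_eq_one_comm.mp hTS
  have hSJS : S * J * S = J := by
    calc S * J * S = (J * Jᵀ) * (S * J * S) := by rw [hJJT, Matrix.one_mul]
    _ = J * (T * S) := by rw [hTdef]; noncomm_ring
    _ = J := by rw [hTS, Matrix.mul_one]
  -- Q = A * T is orthogonal and commutes with J
  have hTsym : Tᵀ = T := by
    rw [hTdef, transpose_mul, transpose_mul, transpose_transpose, hSsym]
    noncomm_ring
  have hQS : (A * T) * S = A := by
    rw [Matrix.mul_assoc, hTS, Matrix.mul_one]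
  have hQQ : (A * T)ᵀ * (A * T) = 1 := by
    calc (A * T)ᵀ * (A * T) = Tᵀ * (Aᵀ * A) * T := by rw [transpose_mul]; noncomm_ring
    _ = T * (S * S) * T := by rw [hTsym, hSS]
    _ = (T * S) * (S * T) := by noncomm_ring
    _ = 1 := by rw [hTS, hST, Matrix.one_mul]
  have hQJQ : (A * T)ᵀ * J * (A * T) = J := by
    calc (A * T)ᵀ * J * (A * T) = Tᵀ * (Aᵀ * J * A) * T := by rw [transpose_mul]; noncomm_ring
    _ = T * (S * J * S) * T := by rw [hTsym, hA, hSJS]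
    _ = (T * S) * J * (S * T) := by noncomm_ring
    _ = J := by rw [hTS, hST, Matrix.one_mul, Matrix.mul_one]
  have hQQ' : (A * T) * (A * T)ᵀ = 1 := mul_eq_one_comm.mp hQQ
  have hJQ : J * (A * T) = (A * T) * J := by
    calc J * (A * T) = ((A * T) * (A * T)ᵀ) * (J * (A * T)) := by rw [hQQ', Matrix.one_mul]
    _ = (A * T) * ((A * T)ᵀ * J * (A * T)) := by noncomm_ring
    _ = (A * T) * J := by rw [hQJQ]
  -- extract blocks
  obtain ⟨a, b, c, d, hQ⟩ : ∃ a b c d, A * T = fromBlocks a b c d :=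
    ⟨_, _, _, _, (fromBlocks_toBlocks _).symm⟩
  rw [hQ, hJ, Jmat, fromBlocks_multiply, fromBlocks_multiply] at hJQ
  simp only [Matrix.zero_mul, Matrix.mul_zero, Matrix.one_mul, Matrix.mul_one,
    Matrix.neg_mul, Matrix.mul_neg, zero_add, add_zero, Matrix.mul_one] at hJQ
  obtain ⟨h1, h2, h3, h4⟩ := fromBlocks_inj.mp hJQ
  have hdetQ : 0 ≤ (A * T).det := by
    rw [hQ, h1, h2]
    exact det_block_nonneg a b
  have hfin : (A * T).det * S.det = A.det := by
    rw [← det_mul, hQS]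
  rw [hdetS, mul_one] at hfin
  nlinarith [hdetA2, hdetQ, hfin]
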